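/- arXiv:1508.03921 — 3 statements merged into one kernel-verified Lean document; each statement's English description precedes it below -/
import Mathlib

section
/- The processes (X_t)_{t∈[0,∞]} and (Y_t)_{t∈[0,∞]} defined by X_t := ess inf_{σ∈𝒯_t} E[U(t,σ) | 𝓕_t] and Y_t := ess sup_{σ∈𝒯_t} E[U(σ,t) | 𝓕_t] are right continuous (pathwise, at every t ∈ [0,∞)). -/
/-!
Common setup for "On the non-zero-sum stopping game ending at the maximum of the stopping
strategies".  Time is indexed by `[0,∞] = ℝ≥0∞`.  Since `Ω` is at most countable and `ℙ`
charges every point, essential suprema/infima over families of stopping times coincide with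
the pointwise ones, which is how they are formalized below.
-/

open MeasureTheory Filter Set
open scoped ENNReal Topology

noncomputable section

namespace StoppingGames

variable {Ω : Type*} [mΩ : MeasurableSpace Ω]

/-- `|a - b|` on `[0,∞]`, via truncated subtraction. -/
def dd (a b : ℝ≥0∞) : ℝ≥0∞ := (a - b) + (b - a)

/-- `𝒯`, the set of stopping times with values in `[0,∞]`. -/
def ST (𝓕 : Filtration ℝ≥0∞ mΩ) : Set (Ω → ℝ≥0∞) := {τ | IsStoppingTime 𝓕 (fun ω => (τ ω : WithTop ℝ≥0∞))}

/-- `𝒯_σ`, the stopping times no less than `σ`. -/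
def STge (𝓕 : Filtration ℝ≥0∞ mΩ) (σ : Ω → ℝ≥0∞) : Set (Ω → ℝ≥0∞) :=
  {τ | IsStoppingTime 𝓕 (fun ω => (τ ω : WithTop ℝ≥0∞)) ∧ ∀ ω, σ ω ≤ τ ω}

/-- `𝒯_{t+}`, the stopping times strictly greater than `t`. -/
def STgt (𝓕 : Filtration ℝ≥0∞ mΩ) (t : ℝ≥0∞) : Set (Ω → ℝ≥0∞) :=
  {τ | IsStoppingTime 𝓕 (fun ω => (τ ω : WithTop ℝ≥0∞)) ∧ ∀ ω, t < τ ω}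

/-- The class `𝕋` of jointly measurable maps `φ : [0,∞] × Ω → [0,∞]` with
`φ(t,·) ∈ 𝒯_{t+}` for every finite `t`. -/
def IsTT (𝓕 : Filtration ℝ≥0∞ mΩ) (φ : ℝ≥0∞ → Ω → ℝ≥0∞) : Prop :=
  Measurable (Function.uncurry φ) ∧ ∀ t : ℝ≥0∞, t ≠ ∞ → φ t ∈ STgt 𝓕 t

/-- A stopping strategy `ρ = (ρ₀, ρ₁) ∈ 𝔗`. -/
def IsStrategy (𝓕 : Filtration ℝ≥0∞ mΩ) (ρ : (Ω → ℝ≥0∞) × (ℝ≥0∞ → Ω → ℝ≥0∞)) : Prop :=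
  IsStoppingTime 𝓕 (fun ω => (ρ.1 ω : WithTop ℝ≥0∞)) ∧ IsTT 𝓕 ρ.2

/-- `𝔗_σ`, the stopping strategies whose first component is `≥ σ`. -/
def IsStrategyGe (𝓕 : Filtration ℝ≥0∞ mΩ) (σ : Ω → ℝ≥0∞)
    (ρ : (Ω → ℝ≥0∞) × (ℝ≥0∞ → Ω → ℝ≥0∞)) : Prop :=
  IsStrategy 𝓕 ρ ∧ ∀ ω, σ ω ≤ ρ.1 ω

/-- `ρ[τ] = ρ₀ 1_{ρ₀ ≤ τ₀} + ρ₁(τ₀) 1_{ρ₀ > τ₀}`. -/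
def play (ρ τ : (Ω → ℝ≥0∞) × (ℝ≥0∞ → Ω → ℝ≥0∞)) : Ω → ℝ≥0∞ := fun ω =>
  if ρ.1 ω ≤ τ.1 ω then ρ.1 ω else ρ.2 (τ.1 ω) ω

/-- `u(ρ,τ) = E[U(ρ[τ], τ[ρ])]`. -/
def payoff (μ : Measure Ω) (U : ℝ≥0∞ → ℝ≥0∞ → Ω → ℝ)
    (ρ τ : (Ω → ℝ≥0∞) × (ℝ≥0∞ → Ω → ℝ≥0∞)) : ℝ :=
  ∫ ω, U (play ρ τ ω) (play τ ρ ω) ω ∂μ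

/-- `u_σ(ρ,τ) = E[U(ρ[τ], τ[ρ]) | m]`. -/
def condPayoff (μ : Measure Ω) (m : MeasurableSpace Ω) (U : ℝ≥0∞ → ℝ≥0∞ → Ω → ℝ)
    (ρ τ : (Ω → ℝ≥0∞) × (ℝ≥0∞ → Ω → ℝ≥0∞)) : Ω → ℝ :=
  μ[fun ω => U (play ρ τ ω) (play τ ρ ω) ω | m]

/-- The grid point `n·h ∈ [0,∞]`. -/
def grid (h : ℝ) (n : ℕ) : ℝ≥0∞ := ENNReal.ofReal (n * h)

/-- `⌊t/h⌋ + 1`. -/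
def gridIdx (h : ℝ) (t : ℝ≥0∞) : ℕ := ⌊t.toReal / h⌋₊ + 1

/-- `ρ_h(t) := ρ̄((⌊t/h⌋+1)h)` for finite `t`, and `ρ_h(∞) := ∞`. -/
def gridStrat (h : ℝ) (bar : ℕ → Ω → ℝ≥0∞) : ℝ≥0∞ → Ω → ℝ≥0∞ := fun t ω =>
  if t = ∞ then ∞ else bar (gridIdx h t) ω

/-- Evaluation `φ(σ) : ω ↦ φ(σ(ω), ω)` of a time-indexed family along a random time. -/
def evalAt (φ : ℝ≥0∞ → Ω → ℝ≥0∞) (σ : Ω → ℝ≥0∞) : Ω → ℝ≥0∞ := fun ω => φ (σ ω) ω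

/-- `X_t = ess inf_{σ ∈ 𝒯_t} E[U(t,σ) | 𝓕_t]` (pointwise infimum, which coincides with the
essential one since `Ω` is countable and every point is charged). -/
def X1v (μ : Measure Ω) (𝓕 : Filtration ℝ≥0∞ mΩ) (U : ℝ≥0∞ → ℝ≥0∞ → Ω → ℝ)
    (t : ℝ≥0∞) (ω : Ω) : ℝ :=
  ⨅ σ : STge 𝓕 (fun _ => t), (μ[fun ω' => U t (σ.1 ω') ω' | 𝓕 t]) ω

/-- `Y_t = ess sup_{σ ∈ 𝒯_t} E[U(σ,t) | 𝓕_t]`. -/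
def Y1v (μ : Measure Ω) (𝓕 : Filtration ℝ≥0∞ mΩ) (U : ℝ≥0∞ → ℝ≥0∞ → Ω → ℝ)
    (t : ℝ≥0∞) (ω : Ω) : ℝ :=
  ⨆ σ : STge 𝓕 (fun _ => t), (μ[fun ω' => U (σ.1 ω') t ω' | 𝓕 t]) ω

/-- Player 2: `X²_t = ess sup_{σ ∈ 𝒯_t} E[U²(t,σ) | 𝓕_t]`. -/
def X2v (μ : Measure Ω) (𝓕 : Filtration ℝ≥0∞ mΩ) (U : ℝ≥0∞ → ℝ≥0∞ → Ω → ℝ)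
    (t : ℝ≥0∞) (ω : Ω) : ℝ :=
  ⨆ σ : STge 𝓕 (fun _ => t), (μ[fun ω' => U t (σ.1 ω') ω' | 𝓕 t]) ω

/-- Player 2: `Y²_t = ess inf_{σ ∈ 𝒯_t} E[U²(σ,t) | 𝓕_t]`. -/
def Y2v (μ : Measure Ω) (𝓕 : Filtration ℝ≥0∞ mΩ) (U : ℝ≥0∞ → ℝ≥0∞ → Ω → ℝ)
    (t : ℝ≥0∞) (ω : Ω) : ℝ :=
  ⨅ σ : STge 𝓕 (fun _ => t), (μ[fun ω' => U (σ.1 ω') t ω' | 𝓕 t]) ω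

/-- `Z_t = U(t,t)`. -/
def Zv (U : ℝ≥0∞ → ℝ≥0∞ → Ω → ℝ) : ℝ≥0∞ → Ω → ℝ := fun t ω => U t t ω

/-- `X_{ρ₀} 1_{ρ₀ < τ₀} + Y_{τ₀} 1_{ρ₀ > τ₀} + Z_{ρ₀} 1_{ρ₀ = τ₀}`. -/
def dynkinKernel (X Y Z : ℝ≥0∞ → Ω → ℝ) (ρ₀ τ₀ : Ω → ℝ≥0∞) (ω : Ω) : ℝ :=
  if ρ₀ ω < τ₀ ω then X (ρ₀ ω) ω else if τ₀ ω < ρ₀ ω then Y (τ₀ ω) ω else Z (ρ₀ ω) ω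

/-- The Dynkin-game payoff `V(ρ₀,τ₀)`. -/
def dynkinV (μ : Measure Ω) (X Y Z : ℝ≥0∞ → Ω → ℝ) (ρ₀ τ₀ : Ω → ℝ≥0∞) : ℝ :=
  ∫ ω, dynkinKernel X Y Z ρ₀ τ₀ ω ∂μ

/-- The conditional Dynkin-game payoff. -/
def condDynkin (μ : Measure Ω) (m : MeasurableSpace Ω) (X Y Z : ℝ≥0∞ → Ω → ℝ)
    (ρ₀ τ₀ : Ω → ℝ≥0∞) : Ω → ℝ :=
  μ[fun ω => dynkinKernel X Y Z ρ₀ τ₀ ω | m]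

/-- `v_t¹`, the (sup-inf) value of the conditional Dynkin game `G_t¹` with payoffs
`(X¹, Y¹, Z¹)` built from `U¹`. -/
def v1v (μ : Measure Ω) (𝓕 : Filtration ℝ≥0∞ mΩ) (U : ℝ≥0∞ → ℝ≥0∞ → Ω → ℝ)
    (t : ℝ≥0∞) (ω : Ω) : ℝ :=
  ⨆ ρ₀ : STge 𝓕 (fun _ => t), ⨅ τ₀ : STge 𝓕 (fun _ => t),
    condDynkin μ (𝓕 t) (X1v μ 𝓕 U) (Y1v μ 𝓕 U) (Zv U) ρ₀.1 τ₀.1 ω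

/-- `v_t²`, the (inf-sup) value of the conditional Dynkin game `G_t²` with payoffs
`(X², Y², Z²)` built from `U²`. -/
def v2v (μ : Measure Ω) (𝓕 : Filtration ℝ≥0∞ mΩ) (U : ℝ≥0∞ → ℝ≥0∞ → Ω → ℝ)
    (t : ℝ≥0∞) (ω : Ω) : ℝ :=
  ⨅ ρ₀ : STge 𝓕 (fun _ => t), ⨆ τ₀ : STge 𝓕 (fun _ => t),
    condDynkin μ (𝓕 t) (X2v μ 𝓕 U) (Y2v μ 𝓕 U) (Zv U) ρ₀.1 τ₀.1 ω

/-- `W_t¹ = E[U¹(t, τ_h²(t)) | 𝓕_t]`. -/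
def W1v (μ : Measure Ω) (𝓕 : Filtration ℝ≥0∞ mΩ) (U : ℝ≥0∞ → ℝ≥0∞ → Ω → ℝ)
    (h : ℝ) (bar : ℕ → Ω → ℝ≥0∞) (t : ℝ≥0∞) (ω : Ω) : ℝ :=
  (μ[fun ω' => U t (gridStrat h bar t ω') ω' | 𝓕 t]) ω

/-- `W_t² = E[U²(ρ_h¹(t), t) | 𝓕_t]`. -/
def W2v (μ : Measure Ω) (𝓕 : Filtration ℝ≥0∞ mΩ) (U : ℝ≥0∞ → ℝ≥0∞ → Ω → ℝ)
    (h : ℝ) (bar : ℕ → Ω → ℝ≥0∞) (t : ℝ≥0∞) (ω : Ω) : ℝ :=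
  (μ[fun ω' => U (gridStrat h bar t ω') t ω' | 𝓕 t]) ω

/-- `μ₁ = inf {t ≥ 0 : v_t¹ ≤ W_t¹ + ε}`. -/
def mu1T (μ : Measure Ω) (𝓕 : Filtration ℝ≥0∞ mΩ) (U : ℝ≥0∞ → ℝ≥0∞ → Ω → ℝ)
    (h ε : ℝ) (bar : ℕ → Ω → ℝ≥0∞) : Ω → ℝ≥0∞ := fun ω =>
  sInf {t | v1v μ 𝓕 U t ω ≤ W1v μ 𝓕 U h bar t ω + ε}

/-- `μ₂ = inf {t ≥ 0 : v_t² ≤ W_t² + ε}`. -/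
def mu2T (μ : Measure Ω) (𝓕 : Filtration ℝ≥0∞ mΩ) (U : ℝ≥0∞ → ℝ≥0∞ → Ω → ℝ)
    (h ε : ℝ) (bar : ℕ → Ω → ℝ≥0∞) : Ω → ℝ≥0∞ := fun ω =>
  sInf {t | v2v μ 𝓕 U t ω ≤ W2v μ 𝓕 U h bar t ω + ε}

/-- `ρ̄(nh)` is a family of `ε`-optimizers for `Y¹_{nh}`:
`E[U(ρ̄(nh), nh) | 𝓕_{nh}] ≥ Y_{nh} − ε`. -/
def IsOptRho1 (μ : Measure Ω) (𝓕 : Filtration ℝ≥0∞ mΩ) (U : ℝ≥0∞ → ℝ≥0∞ → Ω → ℝ)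
    (ε h : ℝ) (bar : ℕ → Ω → ℝ≥0∞) : Prop :=
  ∀ n : ℕ, bar n ∈ STge 𝓕 (fun _ => grid h n) ∧
    ∀ᵐ ω ∂μ, Y1v μ 𝓕 U (grid h n) ω - ε ≤
      (μ[fun ω' => U (bar n ω') (grid h n) ω' | 𝓕 (grid h n)]) ω

/-- `τ̄(nh)` is a family of `ε`-optimizers for `X¹_{nh}`:
`E[U(nh, τ̄(nh)) | 𝓕_{nh}] ≤ X_{nh} + ε`. -/
def IsOptTau1 (μ : Measure Ω) (𝓕 : Filtration ℝ≥0∞ mΩ) (U : ℝ≥0∞ → ℝ≥0∞ → Ω → ℝ)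
    (ε h : ℝ) (bar : ℕ → Ω → ℝ≥0∞) : Prop :=
  ∀ n : ℕ, bar n ∈ STge 𝓕 (fun _ => grid h n) ∧
    ∀ᵐ ω ∂μ, (μ[fun ω' => U (grid h n) (bar n ω') ω' | 𝓕 (grid h n)]) ω ≤
      X1v μ 𝓕 U (grid h n) ω + ε

/-- `ρ̄²(nh)` is a family of `ε`-optimizers for `Y²_{nh}` (an essential infimum). -/
def IsOptRho2 (μ : Measure Ω) (𝓕 : Filtration ℝ≥0∞ mΩ) (U : ℝ≥0∞ → ℝ≥0∞ → Ω → ℝ)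
    (ε h : ℝ) (bar : ℕ → Ω → ℝ≥0∞) : Prop :=
  ∀ n : ℕ, bar n ∈ STge 𝓕 (fun _ => grid h n) ∧
    ∀ᵐ ω ∂μ, (μ[fun ω' => U (bar n ω') (grid h n) ω' | 𝓕 (grid h n)]) ω ≤
      Y2v μ 𝓕 U (grid h n) ω + ε

/-- `τ̄²(nh)` is a family of `ε`-optimizers for `X²_{nh}` (an essential supremum). -/
def IsOptTau2 (μ : Measure Ω) (𝓕 : Filtration ℝ≥0∞ mΩ) (U : ℝ≥0∞ → ℝ≥0∞ → Ω → ℝ)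
    (ε h : ℝ) (bar : ℕ → Ω → ℝ≥0∞) : Prop :=
  ∀ n : ℕ, bar n ∈ STge 𝓕 (fun _ => grid h n) ∧
    ∀ᵐ ω ∂μ, X2v μ 𝓕 U (grid h n) ω - ε ≤
      (μ[fun ω' => U (grid h n) (bar n ω') ω' | 𝓕 (grid h n)]) ω

/-- The standing assumptions on the filtered probability space: `ℙ` charges every point of the
(countable) `Ω`, the filtration is right continuous (usual conditions; completeness is automatic
since null sets are empty), and `𝓕 = 𝓕_∞ = ⋃_{t<∞} 𝓕_t`. -/
def UsualSetup (μ : Measure Ω) (𝓕 : Filtration ℝ≥0∞ mΩ) : Prop :=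
  (∀ ω : Ω, μ {ω} ≠ 0) ∧
  (∀ t : ℝ≥0∞, (𝓕 t : MeasurableSpace Ω) = ⨅ s ∈ Ioi t, (𝓕 s : MeasurableSpace Ω)) ∧
  ((𝓕 ∞ : MeasurableSpace Ω) = mΩ) ∧
  ((⨆ t ∈ Iio (∞ : ℝ≥0∞), (𝓕 t : MeasurableSpace Ω)) = mΩ)

/-- The standing assumptions on a payoff `U`: boundedness, `𝓕_{s∨t}`-measurability of `U(s,t)`,
and the uniform-continuity modulus `r` (bounded, nondecreasing, `r(0+) = r(0) = 0`).  Note that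
the modulus condition, being imposed on all of `[0,∞]`, encodes that the values at `∞` are the
corresponding limits. -/
def PayoffAssumption (𝓕 : Filtration ℝ≥0∞ mΩ) (U : ℝ≥0∞ → ℝ≥0∞ → Ω → ℝ)
    (r : ℝ≥0∞ → ℝ) : Prop :=
  (∃ M : ℝ, ∀ s t ω, |U s t ω| ≤ M) ∧
  (∀ s t : ℝ≥0∞, Measurable[𝓕 (s ⊔ t)] (U s t)) ∧
  Monotone r ∧ (∀ x, 0 ≤ r x) ∧ (∃ C : ℝ, ∀ x, r x ≤ C) ∧ r 0 = 0 ∧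
  Tendsto r (𝓝[>] (0 : ℝ≥0∞)) (𝓝 (0 : ℝ)) ∧
  (∀ s t s' t' : ℝ≥0∞, ∀ ω, |U s t ω - U s' t' ω| ≤ r (dd s s' + dd t t'))

/-- The values of `U` at `∞` are the limits of the values at finite times. -/
def LimitsAtInfty (U : ℝ≥0∞ → ℝ≥0∞ → Ω → ℝ) : Prop :=
  (∀ s ω, Tendsto (fun b => U s b ω) (𝓝[<] (∞ : ℝ≥0∞)) (𝓝 (U s ∞ ω))) ∧
  (∀ t ω, Tendsto (fun a => U a t ω) (𝓝[<] (∞ : ℝ≥0∞)) (𝓝 (U ∞ t ω))) ∧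
  (∀ ω, Tendsto (fun p : ℝ≥0∞ × ℝ≥0∞ => U p.1 p.2 ω)
    ((𝓝[<] (∞ : ℝ≥0∞)) ×ˢ (𝓝[<] (∞ : ℝ≥0∞))) (𝓝 (U ∞ ∞ ω)))

/-- `ess inf_{σ ∈ 𝒯_v} E[U(s,σ) | 𝓕_v]` for a stopping time `v`. -/
def XatST (μ : Measure Ω) (𝓕 : Filtration ℝ≥0∞ mΩ) (U : ℝ≥0∞ → ℝ≥0∞ → Ω → ℝ)
    {v : Ω → ℝ≥0∞} (hv : IsStoppingTime 𝓕 (fun ω => (v ω : WithTop ℝ≥0∞))) (s : ℝ≥0∞) (ω : Ω) : ℝ :=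
  ⨅ σ : STge 𝓕 v, (μ[fun ω' => U s (σ.1 ω') ω' | hv.measurableSpace]) ω

/-- `X̃_v(s) = ess inf_{σ ∈ 𝒯_v} E[U(s,σ) | 𝓕_v]` for a deterministic time `v`. -/
def Xat (μ : Measure Ω) (𝓕 : Filtration ℝ≥0∞ mΩ) (U : ℝ≥0∞ → ℝ≥0∞ → Ω → ℝ)
    (v s : ℝ≥0∞) (ω : Ω) : ℝ :=
  ⨅ σ : STge 𝓕 (fun _ => v), (μ[fun ω' => U s (σ.1 ω') ω' | 𝓕 v]) ω

/-- `ρ₀* = μ₁ 1_{μ₁ ≤ μ₂} + ρ²_{μ₂+δ} 1_{μ₁ > μ₂}`. -/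
def rhoStar0 (m1 m2 rsad2 : Ω → ℝ≥0∞) : Ω → ℝ≥0∞ := fun ω =>
  if m1 ω ≤ m2 ω then m1 ω else rsad2 ω

/-- `ρ₁*(t) = ρ_h²(t)` if `t ≥ μ₁ ∧ μ₂ + δ` and `μ₁ > μ₂`, else `ρ_h¹(t)`. -/
def rhoStar1 (m1 m2 : Ω → ℝ≥0∞) (δ : ℝ) (φ1 φ2 : ℝ≥0∞ → Ω → ℝ≥0∞) :
    ℝ≥0∞ → Ω → ℝ≥0∞ := fun t ω =>
  if (m1 ω ⊓ m2 ω) + ENNReal.ofReal δ ≤ t ∧ m2 ω < m1 ω then φ2 t ω else φ1 t ω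

/-- `τ₀* = τ¹_{μ₁+δ} 1_{μ₁ ≤ μ₂} + μ₂ 1_{μ₁ > μ₂}`. -/
def tauStar0 (m1 m2 tsad1 : Ω → ℝ≥0∞) : Ω → ℝ≥0∞ := fun ω =>
  if m1 ω ≤ m2 ω then tsad1 ω else m2 ω

/-- `τ₁*(t) = τ_h¹(t)` if `t ≥ μ₁ ∧ μ₂ + δ` and `μ₁ ≤ μ₂`, else `τ_h²(t)`. -/
def tauStar1 (m1 m2 : Ω → ℝ≥0∞) (δ : ℝ) (ψ1 ψ2 : ℝ≥0∞ → Ω → ℝ≥0∞) :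
    ℝ≥0∞ → Ω → ℝ≥0∞ := fun t ω =>
  if (m1 ω ⊓ m2 ω) + ENNReal.ofReal δ ≤ t ∧ m1 ω ≤ m2 ω then ψ1 t ω else ψ2 t ω

/-!
At a point `ω` charged by `ℙ`, a conditional expectation given `𝓕_t` is the average over the
`𝓕_t`-atom `A_t` of `ω`. For `t ≤ s`, the map `σ ↦ σ ∨ s` sends `𝒯_t` onto `𝒯_s`; replacing
`U(t,σ)` by `U(s,σ ∨ s)` moves the payoff by at most `r(2(s-t))`, and shrinking the atom from `A_t`
to `A_s` moves the average of a function bounded by `M` by at most `2M ℙ(A_t \ A_s)/ℙ(A_t)`.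
So `|X_s - X_t|` is at most the sum of these two terms, and likewise `|Y_s - Y_t|`, since `Y` is
built like `X` from the swapped payoff `(a, b) ↦ U(b, a)`, with a supremum in place of the infimum.
By right continuity of the filtration, `A_t` is the increasing union of the atoms `A_s` as `s ↓ t`,
so `ℙ(A_s) → ℙ(A_t)` and both terms vanish as `s ↓ t`.
-/

lemma measurable_apply_of_countable {α β γ : Type*} [Countable α] [MeasurableSpace α]
    [MeasurableSpace β] [MeasurableSingletonClass β] [MeasurableSpace γ] {V : β → α → γ}
    (hV : ∀ b, Measurable (V b)) {σ : α → β} (hσ : Measurable σ) :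
    Measurable fun x => V (σ x) x := by
  have : Countable (range σ) := (countable_range σ).to_subtype
  exact (measurable_from_prod_countable_right (f := fun p : range σ × α => V p.1 p.2)
    fun b => hV b).comp ((hσ.subtype_mk (h := mem_range_self)).prodMk measurable_id)

lemma abs_ciInf_comp_sub_ciInf_le {ι κ : Type*} [Nonempty κ] {f : ι → ℝ} {g : κ → ℝ}
    {φ : κ → ι} {c : ℝ} (hφ : φ.Surjective) (hf : BddBelow (range f))
    (hg : BddBelow (range g)) (h : ∀ k, |f (φ k) - g k| ≤ c) :
    |(⨅ i, f i) - ⨅ k, g k| ≤ c := by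
  rw [← hφ.iInf_comp f, abs_sub_le_iff]
  have hfφ : BddBelow (range fun k => f (φ k)) := hf.mono (range_comp_subset_range φ f)
  constructor
  · have : (⨅ k, f (φ k)) - c ≤ ⨅ k, g k :=
      le_ciInf fun k => by linarith [ciInf_le hfφ k, (abs_le.1 (h k)).2]
    linarith
  · have : (⨅ k, g k) - c ≤ ⨅ k, f (φ k) :=
      le_ciInf fun k => by linarith [ciInf_le hg k, (abs_le.1 (h k)).1]
    linarith

lemma abs_ciSup_comp_sub_ciSup_le {ι κ : Type*} [Nonempty κ] {f : ι → ℝ} {g : κ → ℝ}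
    {φ : κ → ι} {c : ℝ} (hφ : φ.Surjective) (hf : BddAbove (range f))
    (hg : BddAbove (range g)) (h : ∀ k, |f (φ k) - g k| ≤ c) :
    |(⨆ i, f i) - ⨆ k, g k| ≤ c := by
  rw [← hφ.iSup_comp f, abs_sub_le_iff]
  have hfφ : BddAbove (range fun k => f (φ k)) := hf.mono (range_comp_subset_range φ f)
  constructor
  · have : (⨆ k, f (φ k)) ≤ (⨆ k, g k) + c :=
      ciSup_le fun k => by linarith [le_ciSup hg k, (abs_le.1 (h k)).2]
    linarith
  · have : (⨆ k, g k) ≤ (⨆ k, f (φ k)) + c :=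
      ciSup_le fun k => by linarith [le_ciSup hfφ k, (abs_le.1 (h k)).1]
    linarith

lemma continuousWithinAt_of_abs_sub_le {α : Type*} [TopologicalSpace α] {g b : α → ℝ}
    {S : Set α} {t : α} (hb : Tendsto b (𝓝[S] t) (𝓝 0)) (h : ∀ s ∈ S, |g s - g t| ≤ b s) :
    ContinuousWithinAt g S t := by
  rw [ContinuousWithinAt, tendsto_iff_dist_tendsto_zero]
  exact squeeze_zero' (Eventually.of_forall fun _ => dist_nonneg)
    (eventually_nhdsWithin_of_forall fun s hs => (Real.dist_eq _ _).trans_le (h s hs)) hb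

local notation "measurableAtom[" m "]" => @measurableAtom _ m

section Atom

variable {α : Type*}

lemma measurableAtom_anti {m m' : MeasurableSpace α} (h : m ≤ m') (a : α) :
    measurableAtom[m'] a ⊆ measurableAtom[m] a := by
  intro x hx
  simp only [measurableAtom, mem_iInter] at hx ⊢
  exact fun s has hs => hx s has (h s hs)

lemma measure_measurableAtom_ne_zero {m₀ : MeasurableSpace α} {μ : Measure α}
    (m : MeasurableSpace α) {a : α} (ha : μ {a} ≠ 0) :
    μ (measurableAtom[m] a) ≠ 0 :=
  fun h0 => ha (measure_mono_null (singleton_subset_iff.2 (mem_measurableAtom_self a)) h0)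

end Atom

section Average

variable {α : Type*} {m₀ : MeasurableSpace α} {μ : Measure α} {f : α → ℝ} {M : ℝ}

lemma abs_setAverage_le {s : Set α} (hs : μ s ≠ ∞) (hM₀ : 0 ≤ M) (hM : ∀ x, |f x| ≤ M) :
    |⨍ x in s, f x ∂μ| ≤ M := by
  rw [setAverage_eq, smul_eq_mul, abs_mul, abs_inv, abs_of_nonneg measureReal_nonneg]
  rcases eq_or_lt_of_le (measureReal_nonneg (μ := μ) (s := s)) with h0 | hpos
  · rw [← h0, inv_zero, zero_mul]
    exact hM₀
  · rw [inv_mul_le_iff₀ hpos, mul_comm]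
    exact norm_setIntegral_le_of_norm_le_const hs.lt_top fun x _ =>
      (Real.norm_eq_abs (f x)).trans_le (hM x)

lemma abs_setAverage_sub_setAverage_le {s t : Set α} (hst : s ⊆ t) (hs : MeasurableSet s)
    (ht : MeasurableSet t) (hs₀ : μ s ≠ 0) (ht_top : μ t ≠ ∞) (hf : IntegrableOn f t μ)
    (hM : ∀ x, |f x| ≤ M) :
    |⨍ x in s, f x ∂μ - ⨍ x in t, f x ∂μ| ≤ 2 * M * μ.real (t \ s) / μ.real t := by
  have hs_top : μ s ≠ ∞ := ne_top_of_le_ne_top ht_top (measure_mono hst)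
  have hd_top : μ (t \ s) ≠ ∞ := ne_top_of_le_ne_top ht_top (measure_mono sdiff_subset)
  obtain ⟨x₀, -⟩ := nonempty_of_measure_ne_zero hs₀
  have hM₀ : 0 ≤ M := (abs_nonneg _).trans (hM x₀)
  set a := ⨍ x in s, f x ∂μ
  set d := ⨍ x in t \ s, f x ∂μ
  set p := μ.real s
  set q := μ.real (t \ s)
  have hp : 0 < p := ENNReal.toReal_pos hs₀ hs_top
  have hq : 0 ≤ q := measureReal_nonneg
  have hpq : μ.real t = p + q := by
    rw [← union_sdiff_cancel hst, measureReal_union disjoint_sdiff_right (ht.diff hs)]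
  have havg : ⨍ x in t, f x ∂μ = p / (p + q) * a + q / (p + q) * d := by
    rw [← union_sdiff_cancel hst]
    exact average_union disjoint_sdiff_right.aedisjoint (ht.diff hs).nullMeasurableSet hs_top
      hd_top (hf.mono_set hst) (hf.mono_set sdiff_subset)
  have had : |a - d| ≤ 2 * M := (abs_sub _ _).trans (by
    linarith [abs_setAverage_le hs_top hM₀ hM, abs_setAverage_le hd_top hM₀ hM])
  have hdiff : a - ⨍ x in t, f x ∂μ = q / (p + q) * (a - d) := by
    rw [havg]
    field_simp
    ring
  calc |a - ⨍ x in t, f x ∂μ| = q / (p + q) * |a - d| := by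
        rw [hdiff, abs_mul, abs_of_nonneg (by positivity)]
    _ ≤ q / (p + q) * (2 * M) := by gcongr
    _ = 2 * M * q / μ.real t := by rw [hpq]; ring

end Average

section CondExp

variable {α : Type*} [Countable α] {m m' m₀ : MeasurableSpace α} {μ : Measure[m₀] α}
  {f g : α → ℝ} {M c : ℝ} {a : α}

lemma abs_condExp_apply_le (ha : μ {a} ≠ 0) (hM : ∀ x, |f x| ≤ M) : |μ[f | m] a| ≤ M :=
  ae_iff_of_countable.1 (ae_bdd_abs_condExp_of_ae_bdd_abs (Eventually.of_forall hM)) a ha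

lemma abs_condExp_sub_condExp_apply_le (ha : μ {a} ≠ 0) (hf : Integrable f μ)
    (hg : Integrable g μ) (hc : ∀ x, |f x - g x| ≤ c) : |μ[f | m] a - μ[g | m] a| ≤ c := by
  rw [← Pi.sub_apply, ← ae_iff_of_countable.1 (condExp_sub hf hg m) a ha]
  exact abs_condExp_apply_le ha hc

variable [IsFiniteMeasure μ]

lemma condExp_apply_eq_setAverage (hm : m ≤ m₀) (hf : Integrable f μ) (ha : μ {a} ≠ 0) :
    μ[f | m] a = ⨍ x in measurableAtom[m] a, f x ∂μ := by
  set A := measurableAtom[m] a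
  have hAm : MeasurableSet[m] A := @MeasurableSet.measurableAtom_of_countable _ m _ a
  have hconst : ∀ x ∈ A, μ[f | m] x = μ[f | m] a := fun x hx =>
    @mem_of_mem_measurableAtom _ m _ _ hx _
      (stronglyMeasurable_condExp.measurable (measurableSet_singleton (μ[f | m] a))) rfl
  rw [← setAverage_const (measure_measurableAtom_ne_zero m ha) (measure_ne_top μ A) (μ[f | m] a),
    setAverage_eq, setAverage_eq, ← setIntegral_congr_fun (hm A hAm) hconst,
    setIntegral_condExp hm hf hAm]

lemma abs_condExp_sub_condExp_apply_le_of_le (hm' : m' ≤ m) (hm : m ≤ m₀) (hf : Integrable f μ)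
    (hM : ∀ x, |f x| ≤ M) (ha : μ {a} ≠ 0) :
    |μ[f | m] a - μ[f | m'] a| ≤
      2 * M * μ.real (measurableAtom[m'] a \ measurableAtom[m] a) /
        μ.real (measurableAtom[m'] a) := by
  rw [condExp_apply_eq_setAverage hm hf ha, condExp_apply_eq_setAverage (hm'.trans hm) hf ha]
  exact abs_setAverage_sub_setAverage_le (measurableAtom_anti hm' a)
    (hm _ (@MeasurableSet.measurableAtom_of_countable _ m _ a))
    (hm'.trans hm _ (@MeasurableSet.measurableAtom_of_countable _ m' _ a))
    (measure_measurableAtom_ne_zero m ha) (measure_ne_top μ _) hf.integrableOn hM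

end CondExp

section RightContinuous

variable {α ι : Type*} [Countable α] {m₀ : MeasurableSpace α} [LinearOrder ι] [TopologicalSpace ι]
  [OrderTopology ι] {𝓕 : Filtration ι m₀} {t : ι}

lemma measurableAtom_eq_iUnion_of_tendsto
    (hrc : (𝓕 t : MeasurableSpace α) = ⨅ s ∈ Ioi t, (𝓕 s : MeasurableSpace α)) {u : ℕ → ι}
    (hu : Antitone u) (htu : ∀ n, t < u n) (hlim : Tendsto u atTop (𝓝 t)) (a : α) :
    measurableAtom[𝓕 t] a = ⋃ n, measurableAtom[𝓕 (u n)] a := by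
  have hmono : Monotone fun n => measurableAtom[𝓕 (u n)] a :=
    fun n k hnk => measurableAtom_anti (𝓕.mono (hu hnk)) a
  refine Subset.antisymm (@measurableAtom_subset _ (𝓕 t) _ _ ?_ (mem_iUnion.2 ⟨0, ?_⟩))
    (iUnion_subset fun n => measurableAtom_anti (𝓕.mono (htu n).le) a)
  · rw [hrc]
    simp only [MeasurableSpace.measurableSet_iInf]
    intro s hs
    obtain ⟨N, hN⟩ := (hlim.eventually (gt_mem_nhds hs)).exists
    rw [← hmono.iUnion_nat_add N]
    exact MeasurableSet.iUnion fun n => 𝓕.mono ((hu (Nat.le_add_left N n)).trans hN.le) _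
      (@MeasurableSet.measurableAtom_of_countable _ (𝓕 (u (n + N))) _ a)
  · exact @mem_measurableAtom_self _ (𝓕 (u 0)) a

variable [DenselyOrdered ι] [FirstCountableTopology ι]

lemma tendsto_measure_measurableAtom_nhdsGT
    (hrc : (𝓕 t : MeasurableSpace α) = ⨅ s ∈ Ioi t, (𝓕 s : MeasurableSpace α))
    (μ : Measure α) (a : α) :
    Tendsto (fun s => μ (measurableAtom[𝓕 s] a)) (𝓝[>] t) (𝓝 (μ (measurableAtom[𝓕 t] a))) := by
  rcases (Ioi t).eq_empty_or_nonempty with h | ⟨y, hy⟩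
  · simp [h]
  obtain ⟨u, hu, hu_mem, hlim⟩ := exists_seq_strictAnti_tendsto' hy
  have hanti : Antitone fun s => μ (measurableAtom[𝓕 s] a) :=
    fun s s' h => measure_mono (measurableAtom_anti (𝓕.mono h) a)
  have hseq : Tendsto (fun n => μ (measurableAtom[𝓕 (u n)] a)) atTop
      (𝓝 (μ (measurableAtom[𝓕 t] a))) := by
    rw [measurableAtom_eq_iUnion_of_tendsto hrc hu.antitone (fun n => (hu_mem n).1) hlim a]
    exact tendsto_measure_iUnion_atTop fun n k hnk =>
      measurableAtom_anti (𝓕.mono (hu.antitone hnk)) a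
  have hu' : Tendsto u atTop (𝓝[>] t) :=
    tendsto_nhdsWithin_iff.2 ⟨hlim, Eventually.of_forall fun n => (hu_mem n).1⟩
  have hright := hanti.tendsto_nhdsGT t
  rwa [tendsto_nhds_unique (hright.comp hu') hseq] at hright

lemma tendsto_measureReal_sdiff_measurableAtom
    (hrc : (𝓕 t : MeasurableSpace α) = ⨅ s ∈ Ioi t, (𝓕 s : MeasurableSpace α))
    (μ : Measure α) [IsFiniteMeasure μ] (a : α) :
    Tendsto (fun s => μ.real (measurableAtom[𝓕 t] a \ measurableAtom[𝓕 s] a)) (𝓝[≥] t) (𝓝 0) := by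
  have hcont : ContinuousWithinAt (fun s => μ.real (measurableAtom[𝓕 s] a)) (Ici t) t := by
    rw [← continuousWithinAt_Ioi_iff_Ici]
    exact (ENNReal.tendsto_toReal (measure_ne_top μ _)).comp
      (tendsto_measure_measurableAtom_nhdsGT hrc μ a)
  have hsub := (tendsto_const_nhds (x := μ.real (measurableAtom[𝓕 t] a))).sub hcont
  rw [sub_self] at hsub
  refine hsub.congr' ?_
  filter_upwards [self_mem_nhdsWithin] with s hs
  rw [measureReal_sdiff (measurableAtom_anti (𝓕.mono hs) a)
    (𝓕.le s _ (@MeasurableSet.measurableAtom_of_countable _ (𝓕 s) _ a))]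

end RightContinuous

section Values

variable {μ : Measure Ω} {𝓕 : Filtration ℝ≥0∞ mΩ} {U V : ℝ≥0∞ → ℝ≥0∞ → Ω → ℝ} {r : ℝ≥0∞ → ℝ}
  {M : ℝ} {s t : ℝ≥0∞} {ω : Ω}

lemma PayoffAssumption.swap (hU : PayoffAssumption 𝓕 U r) :
    PayoffAssumption 𝓕 (Function.swap U) r := by
  obtain ⟨⟨M, hM⟩, hmeas, hr, hr_nonneg, hr_bdd, hr0, hr_lim, hmod⟩ := hU
  refine ⟨⟨M, fun s t => hM t s⟩, fun s t => sup_comm t s ▸ hmeas t s, hr, hr_nonneg, hr_bdd, hr0,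
    hr_lim, fun s t s' t' x => ?_⟩
  rw [add_comm]
  exact hmod t s t' s' x

lemma dd_add_dd_sup_le {a : ℝ≥0∞} (hts : t ≤ s) (hta : t ≤ a) :
    dd s t + dd (a ⊔ s) a ≤ 2 * (s - t) := by
  simp only [dd, tsub_eq_zero_of_le hts, tsub_eq_zero_of_le (le_sup_left : a ≤ a ⊔ s), add_zero,
    two_mul]
  gcongr (s - t) + ?_
  rcases le_total s a with hsa | has
  · simp [sup_eq_left.2 hsa]
  · rw [sup_eq_right.2 has]
    exact tsub_le_tsub_left hta s

lemma measurable_of_mem_STge {σ v : Ω → ℝ≥0∞} (hσ : σ ∈ STge 𝓕 v) : Measurable σ := by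
  simpa using hσ.1.measurable'.untopD 0

instance STge.instNonempty {v : Ω → ℝ≥0∞} : Nonempty (STge 𝓕 v) :=
  ⟨⟨fun _ => ∞, isStoppingTime_const 𝓕 ∞, fun _ => le_top⟩⟩

def STge.maxConst (s : ℝ≥0∞) {v : Ω → ℝ≥0∞} (σ : STge 𝓕 v) : STge 𝓕 (fun _ => s) :=
  ⟨fun x => σ.1 x ⊔ s, by simpa using σ.2.1.max_const s, fun _ => le_sup_right⟩

lemma STge.maxConst_surjective (hts : t ≤ s) :
    (STge.maxConst (𝓕 := 𝓕) (v := fun _ => t) s).Surjective := fun τ =>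
  ⟨⟨τ.1, τ.2.1, fun x => hts.trans (τ.2.2 x)⟩,
    Subtype.ext (funext fun x => sup_eq_left.2 (τ.2.2 x))⟩

/-- The gap between the conditional expectations at times `t ≤ s`: the first summand comes from
moving the time arguments of the payoff, the second from enlarging `𝓕_t` to `𝓕_s`. -/
def rightGap (μ : Measure Ω) (𝓕 : Filtration ℝ≥0∞ mΩ) (r : ℝ≥0∞ → ℝ) (M : ℝ) (t s : ℝ≥0∞)
    (ω : Ω) : ℝ :=
  r (2 * (s - t)) + 2 * M * μ.real (measurableAtom[𝓕 t] ω \ measurableAtom[𝓕 s] ω) /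
    μ.real (measurableAtom[𝓕 t] ω)

lemma tendsto_rightGap [Countable Ω] [IsFiniteMeasure μ] (hr0 : r 0 = 0)
    (hr_lim : Tendsto r (𝓝[>] 0) (𝓝 0))
    (hrc : (𝓕 t : MeasurableSpace Ω) = ⨅ s ∈ Ioi t, (𝓕 s : MeasurableSpace Ω)) (ht : t ≠ ∞)
    (ω : Ω) : Tendsto (fun s => rightGap μ 𝓕 r M t s ω) (𝓝[≥] t) (𝓝 0) := by
  have hr : Tendsto r (𝓝 0) (𝓝 0) := by
    rw [← hr0] at hr_lim ⊢
    exact (continuousWithinAt_Ioi_iff_Ici.1 hr_lim).continuousAt (by simp)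
  have hsub : Tendsto (fun s => 2 * (s - t)) (𝓝[≥] t) (𝓝 0) := by
    have h : Tendsto (fun s => 2 * (s - t)) (𝓝 t) (𝓝 (2 * (t - t))) :=
      ENNReal.Tendsto.const_mul (ENNReal.Tendsto.sub tendsto_id tendsto_const_nhds (Or.inl ht))
        (Or.inr ENNReal.ofNat_ne_top)
    simpa using h.mono_left nhdsWithin_le_nhds
  simpa [rightGap] using (hr.comp hsub).add
    (((tendsto_measureReal_sdiff_measurableAtom hrc μ ω).const_mul (2 * M)).div_const
      (μ.real (measurableAtom[𝓕 t] ω)))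

variable [Countable Ω] [IsFiniteMeasure μ]

lemma abs_condExp_maxConst_sub_condExp_le (hV : PayoffAssumption 𝓕 V r)
    (hM : ∀ a b x, |V a b x| ≤ M) (hω : μ {ω} ≠ 0) (hts : t ≤ s) {σ : Ω → ℝ≥0∞}
    (hσ : Measurable σ) (htσ : ∀ x, t ≤ σ x) :
    |μ[fun x => V s (σ x ⊔ s) x | 𝓕 s] ω - μ[fun x => V t (σ x) x | 𝓕 t] ω| ≤
      rightGap μ 𝓕 r M t s ω := by
  obtain ⟨-, hmeas, hr, -, -, -, -, hmod⟩ := hV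
  have hint : ∀ a {τ : Ω → ℝ≥0∞}, Measurable τ → Integrable (fun x => V a (τ x) x) μ :=
    fun a τ hτ => Integrable.of_bound (measurable_apply_of_countable
      (fun b => (hmeas a b).mono (𝓕.le _) le_rfl) hτ).aestronglyMeasurable M
      (Eventually.of_forall fun x => (Real.norm_eq_abs _).trans_le (hM _ _ x))
  calc _ ≤ |μ[fun x => V s (σ x ⊔ s) x | 𝓕 s] ω - μ[fun x => V t (σ x) x | 𝓕 s] ω| +
        |μ[fun x => V t (σ x) x | 𝓕 s] ω - μ[fun x => V t (σ x) x | 𝓕 t] ω| := abs_sub_le _ _ _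
    _ ≤ rightGap μ 𝓕 r M t s ω := add_le_add
        (abs_condExp_sub_condExp_apply_le hω (hint s (hσ.max measurable_const)) (hint t hσ)
          fun x => (hmod _ _ _ _ x).trans (hr (dd_add_dd_sup_le hts (htσ x))))
        (abs_condExp_sub_condExp_apply_le_of_le (𝓕.mono hts) (𝓕.le s) (hint t hσ)
          (fun x => hM _ _ x) hω)

lemma abs_X1v_sub_X1v_le (hU : PayoffAssumption 𝓕 U r) (hM : ∀ a b x, |U a b x| ≤ M)
    (hω : μ {ω} ≠ 0) (hts : t ≤ s) :
    |X1v μ 𝓕 U s ω - X1v μ 𝓕 U t ω| ≤ rightGap μ 𝓕 r M t s ω := by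
  have hbdd : ∀ v, BddBelow
      (range fun σ : STge 𝓕 (fun _ => v) => μ[fun x => U v (σ.1 x) x | 𝓕 v] ω) :=
    fun v => ⟨-M, forall_mem_range.2 fun σ =>
      (abs_le.1 (abs_condExp_apply_le hω fun x => hM _ _ x)).1⟩
  exact abs_ciInf_comp_sub_ciInf_le (STge.maxConst_surjective hts) (hbdd s) (hbdd t) fun σ =>
    abs_condExp_maxConst_sub_condExp_le hU hM hω hts (measurable_of_mem_STge σ.2) σ.2.2

lemma abs_Y1v_sub_Y1v_le (hU : PayoffAssumption 𝓕 U r) (hM : ∀ a b x, |U a b x| ≤ M)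
    (hω : μ {ω} ≠ 0) (hts : t ≤ s) :
    |Y1v μ 𝓕 U s ω - Y1v μ 𝓕 U t ω| ≤ rightGap μ 𝓕 r M t s ω := by
  have hbdd : ∀ v, BddAbove
      (range fun σ : STge 𝓕 (fun _ => v) => μ[fun x => U (σ.1 x) v x | 𝓕 v] ω) :=
    fun v => ⟨M, forall_mem_range.2 fun σ =>
      (abs_le.1 (abs_condExp_apply_le hω fun x => hM _ _ x)).2⟩
  exact abs_ciSup_comp_sub_ciSup_le (STge.maxConst_surjective hts) (hbdd s) (hbdd t) fun σ =>
    abs_condExp_maxConst_sub_condExp_le hU.swap (fun a b x => hM b a x) hω hts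
      (measurable_of_mem_STge σ.2) σ.2.2

end Values

/-- Lemma 3.1: the processes `X` and `Y` are (pathwise) right continuous at
every `t ∈ [0,∞)`. -/
theorem X_Y_rightContinuous [Countable Ω] (μ : Measure Ω) [IsProbabilityMeasure μ]
    (𝓕 : Filtration ℝ≥0∞ mΩ) (hsetup : UsualSetup μ 𝓕)
    (U : ℝ≥0∞ → ℝ≥0∞ → Ω → ℝ) (r : ℝ≥0∞ → ℝ) (hU : PayoffAssumption 𝓕 U r) :
    ∀ ω : Ω, ∀ t : ℝ≥0∞, t ≠ ∞ →
      ContinuousWithinAt (fun s => X1v μ 𝓕 U s ω) (Ici t) t ∧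
      ContinuousWithinAt (fun s => Y1v μ 𝓕 U s ω) (Ici t) t := by
  obtain ⟨hcharge, hrc, -, -⟩ := hsetup
  have ⟨⟨M, hM⟩, _, _, _, _, hr0, hr_lim, _⟩ := hU
  intro ω t ht
  have hgap := tendsto_rightGap (μ := μ) (M := M) hr0 hr_lim (hrc t) ht ω
  exact ⟨continuousWithinAt_of_abs_sub_le hgap fun s hs => abs_X1v_sub_X1v_le hU hM (hcharge ω) hs,
    continuousWithinAt_of_abs_sub_le hgap fun s hs => abs_Y1v_sub_Y1v_le hU hM (hcharge ω) hs⟩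

end StoppingGames
end
end

section
/- For every ε > 0 there exists h' > 0 such that for every h ∈ (0, h'), for all stopping times ρ₀, τ₀ ∈ 𝒯: X_{ρ₀} > E[U(ρ₀, τ_h(ρ₀)) | 𝓕_{ρ₀}] − 2ε and Y_{τ₀} < E[U(ρ_h(τ₀), τ₀) | 𝓕_{τ₀}] + 2ε almost surely. -/
/-!
Common setup for "On the non-zero-sum stopping game ending at the maximum of the stopping
strategies".  Time is indexed by `[0,∞] = ℝ≥0∞`.  Since `Ω` is at most countable and `ℙ`
charges every point, essential suprema/infima over families of stopping times coincide with
the pointwise ones, which is how they are formalized below.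
-/

open MeasureTheory Filter Set
open scoped ENNReal Topology

noncomputable section

namespace StoppingGames

variable {Ω : Type*} [mΩ : MeasurableSpace Ω]

/-!
Fix `ω` and put `t = ρ₀(ω)`. On `{ρ₀ = t}` conditioning on `𝓕_{ρ₀}` is conditioning on `𝓕_t`,
so it suffices to bound `E[U(t, τ_h(t)) | 𝓕_t]` for deterministic `t`; for `t = ∞` it equals
`X_∞`. For finite `t` let `g ∈ [t, t + h]` be the grid point with `τ_h(t) = τ̄(g)`. Moving `t` to
`g` costs `r(2h)`; at `g`, `τ̄(g)` is `ε`-optimal against `σ ∨ g` for every `σ ≥ t`, and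
`(g, σ ∨ g)` is within `2h` of `(t, σ)`. Hence `E[U(t, τ_h(t)) | 𝓕_t] ≤ X_t + ε + 2 r(2h)`,
which is `< X_t + 2ε` once `r(2h) < ε/2`. The estimate for `Y` is the one for `X` applied to the
payoff `(s, t) ↦ -U(t, s)`. Since `Ω` is countable and `ℙ` charges every point, almost sure
statements hold pointwise.
-/

section CountableCharged

variable [Countable Ω] {μ : Measure Ω}

theorem forall_of_ae (hc : ∀ ω, μ {ω} ≠ 0) {p : Ω → Prop} (h : ∀ᵐ ω ∂μ, p ω) (ω : Ω) : p ω :=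
  ae_iff_of_countable.mp h ω (hc ω)

theorem forall_mem_of_ae_restrict (hc : ∀ ω, μ {ω} ≠ 0) {A : Set Ω} (hA : MeasurableSet A)
    {p : Ω → Prop} (h : ∀ᵐ ω ∂μ.restrict A, p ω) {ω : Ω} (hω : ω ∈ A) : p ω :=
  ae_iff_of_countable.mp h ω <| by
    rw [Measure.restrict_apply' hA, singleton_inter_of_mem hω]
    exact hc ω

theorem measurable_apply_of_countable_s5 {ι β : Type*} [MeasurableSpace ι]
    [MeasurableSingletonClass ι] [MeasurableSpace β] {F : ι → Ω → β}
    (hF : ∀ i, Measurable (F i)) {τ : Ω → ι} (hτ : Measurable τ) :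
    Measurable fun ω => F (τ ω) ω := by
  intro s hs
  have hpre : (fun ω => F (τ ω) ω) ⁻¹' s = ⋃ ω', τ ⁻¹' {τ ω'} ∩ F (τ ω') ⁻¹' s := by
    ext ω
    simp only [mem_preimage, mem_iUnion, mem_inter_iff, mem_singleton_iff]
    exact ⟨fun h => ⟨ω, rfl, h⟩, fun ⟨_, hτω, h⟩ => hτω ▸ h⟩
  rw [hpre]
  exact .iUnion fun ω' => (hτ (measurableSet_singleton _)).inter (hF _ hs)

theorem condExp_neg_apply (hc : ∀ ω, μ {ω} ≠ 0) {m : MeasurableSpace Ω} (f : Ω → ℝ) (ω : Ω) :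
    μ[fun ω' => -f ω' | m] ω = -μ[f | m] ω :=
  forall_of_ae (mΩ := mΩ) hc (condExp_neg f m) ω

variable [IsFiniteMeasure μ]

theorem condExp_le_condExp_add (hc : ∀ ω, μ {ω} ≠ 0) {m : MeasurableSpace Ω} (hm : m ≤ mΩ)
    {f g : Ω → ℝ} {c : ℝ} (hf : Integrable f μ) (hg : Integrable g μ)
    (hfg : ∀ ω, f ω ≤ g ω + c) (ω : Ω) : μ[f | m] ω ≤ μ[g | m] ω + c := by
  have hc' : Integrable (fun _ => c) μ := integrable_const (m := mΩ) c
  have hmono : μ[f | m] ≤ᵐ[μ] μ[g + fun _ => c | m] :=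
    condExp_mono hf (hg.add hc') (ae_of_all _ hfg)
  have hadd : μ[g + fun _ => c | m] =ᵐ[μ] μ[g | m] + fun _ => c := by
    simpa only [condExp_const hm] using condExp_add hg hc' m
  exact forall_of_ae (mΩ := mΩ) hc (hmono.trans hadd.le) ω

theorem condExp_stoppingTime_apply (hc : ∀ ω, μ {ω} ≠ 0) {𝓕 : Filtration ℝ≥0∞ mΩ}
    {τ : Ω → ℝ≥0∞} (hτ : IsStoppingTime 𝓕 fun ω => (τ ω : WithTop ℝ≥0∞))
    {F : ℝ≥0∞ → Ω → ℝ} (hF : Integrable (fun ω => F (τ ω) ω) μ) (hFt : ∀ t, Integrable (F t) μ)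
    (ω : Ω) : μ[fun ω' => F (τ ω') ω' | hτ.measurableSpace] ω = μ[F (τ ω) | 𝓕 (τ ω)] ω := by
  set t := τ ω
  set A := {ω' | τ ω' = t}
  have hA : MeasurableSet[hτ.measurableSpace] A := by
    simpa only [WithTop.coe_eq_coe] using
      hτ.measurableSet_eq_of_countable_range' (countable_range _) t
  have hA' : MeasurableSet A := hτ.measurableSpace_le _ hA
  have hlocal : μ[fun ω' => F (τ ω') ω' | hτ.measurableSpace]
      =ᵐ[μ.restrict A] μ[F t | hτ.measurableSpace] := by
    rw [ae_eq_restrict_iff_indicator_ae_eq hA']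
    refine (condExp_indicator hF hA).symm.trans ?_
    have hFA : A.indicator (fun ω' => F (τ ω') ω') = A.indicator (F t) :=
      indicator_congr fun ω' (hω' : τ ω' = t) => by rw [hω']
    rw [hFA]
    exact condExp_indicator (hFt t) hA
  have hstop : μ[F t | hτ.measurableSpace] =ᵐ[μ.restrict A] μ[F t | 𝓕 t] := by
    simpa only [WithTop.coe_eq_coe] using
      condExp_stopping_time_ae_eq_restrict_eq_of_countable_range hτ (countable_range _) t
  exact forall_mem_of_ae_restrict hc hA' (hlocal.trans hstop) rfl

end CountableCharged

theorem dd_self (a : ℝ≥0∞) : dd a a = 0 := by simp [dd]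

theorem dd_comm (a b : ℝ≥0∞) : dd a b = dd b a := add_comm _ _

theorem dd_le_of_le_of_le_add {a b c : ℝ≥0∞} (hab : a ≤ b) (hba : b ≤ a + c) : dd a b ≤ c := by
  rw [dd, tsub_eq_zero_of_le hab, zero_add, tsub_le_iff_left]
  exact hba

theorem le_grid_gridIdx {h : ℝ} (hh : 0 < h) {t : ℝ≥0∞} (ht : t ≠ ∞) :
    t ≤ grid h (gridIdx h t) := by
  rw [grid, gridIdx, ENNReal.le_ofReal_iff_toReal_le ht (by positivity)]
  push_cast
  rw [← div_le_iff₀ hh]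
  exact (Nat.lt_floor_add_one (t.toReal / h)).le

theorem grid_gridIdx_le {h : ℝ} (hh : 0 < h) {t : ℝ≥0∞} (ht : t ≠ ∞) :
    grid h (gridIdx h t) ≤ t + ENNReal.ofReal h := by
  have hrhs : t + ENNReal.ofReal h = ENNReal.ofReal (t.toReal + h) := by
    rw [ENNReal.ofReal_add ENNReal.toReal_nonneg hh.le, ENNReal.ofReal_toReal ht]
  rw [hrhs, grid, gridIdx]
  refine ENNReal.ofReal_le_ofReal ?_
  have hfloor : (⌊t.toReal / h⌋₊ : ℝ) * h ≤ t.toReal :=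
    (le_div_iff₀ hh).mp (Nat.floor_le (div_nonneg ENNReal.toReal_nonneg hh.le))
  push_cast
  linarith

theorem tendsto_ofReal_add_ofReal_nhdsGT_zero :
    Tendsto (fun h : ℝ => ENNReal.ofReal h + ENNReal.ofReal h) (𝓝[>] 0) (𝓝[>] 0) := by
  refine tendsto_nhdsWithin_of_tendsto_nhds_of_eventually_within _ ?_ ?_
  · have hcont : Continuous fun h : ℝ => ENNReal.ofReal h + ENNReal.ofReal h :=
      ENNReal.continuous_ofReal.add ENNReal.continuous_ofReal
    exact (hcont.tendsto' 0 0 (by simp)).mono_left nhdsWithin_le_nhds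
  · filter_upwards [self_mem_nhdsWithin] with h (hh : 0 < h)
    exact (ENNReal.ofReal_pos.mpr hh).trans_le le_self_add

theorem measurable_of_isStoppingTime {𝓕 : Filtration ℝ≥0∞ mΩ} {τ : Ω → ℝ≥0∞}
    (hτ : IsStoppingTime 𝓕 fun ω => (τ ω : WithTop ℝ≥0∞)) : Measurable τ :=
  measurable_of_Iic fun t => 𝓕.le t _
    (by simpa only [WithTop.coe_le_coe] using hτ t : MeasurableSet[𝓕 t] {ω | τ ω ≤ t})

theorem measurable_gridStrat {h : ℝ} {bar : ℕ → Ω → ℝ≥0∞} (hbar : ∀ n, Measurable (bar n))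
    (t : ℝ≥0∞) : Measurable (gridStrat h bar t) := by
  unfold gridStrat
  split_ifs
  exacts [measurable_const, hbar _]

section Payoff

variable {𝓕 : Filtration ℝ≥0∞ mΩ} {U : ℝ≥0∞ → ℝ≥0∞ → Ω → ℝ} {r : ℝ≥0∞ → ℝ}

theorem PayoffAssumption.le_add_of_dd_le (hU : PayoffAssumption 𝓕 U r) {a b a' b' d : ℝ≥0∞}
    (hd : dd a a' + dd b b' ≤ d) (ω : Ω) : U a b ω ≤ U a' b' ω + r d := by
  obtain ⟨-, -, hmono, -, -, -, -, hmod⟩ := hU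
  linarith [(abs_le.mp (hmod a b a' b' ω)).2, hmono hd]

theorem PayoffAssumption.integrable_comp [Countable Ω] {μ : Measure Ω} [IsFiniteMeasure μ]
    (hU : PayoffAssumption 𝓕 U r) {a b : Ω → ℝ≥0∞} (ha : Measurable a) (hb : Measurable b) :
    Integrable (fun ω => U (a ω) (b ω) ω) μ := by
  obtain ⟨⟨M, hM⟩, hmeas, -⟩ := hU
  have hmeas' : ∀ s t, Measurable (U s t) := fun s t => (hmeas s t).mono (𝓕.le _) le_rfl
  refine Integrable.of_bound ?_ M (ae_of_all _ fun ω => (hM _ _ ω).trans_eq' (Real.norm_eq_abs _))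
  exact (measurable_apply_of_countable_s5
    (fun s => measurable_apply_of_countable_s5 (hmeas' s) hb) ha).aestronglyMeasurable

theorem PayoffAssumption.bddBelow_condExp [Countable Ω] {μ : Measure Ω} [IsFiniteMeasure μ]
    (hc : ∀ ω, μ {ω} ≠ 0) (hU : PayoffAssumption 𝓕 U r) (t : ℝ≥0∞) (ω : Ω) :
    BddBelow (range fun σ : STge 𝓕 (fun _ => t) => μ[fun ω' => U t (σ.1 ω') ω' | 𝓕 t] ω) := by
  obtain ⟨⟨M, hM⟩, -⟩ := hU
  refine ⟨-M, ?_⟩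
  rintro _ ⟨σ, rfl⟩
  exact neg_le_of_abs_le <| forall_of_ae hc
    (ae_bdd_abs_condExp_of_ae_bdd_abs (ae_of_all _ fun ω' => hM _ _ ω')) ω

variable [Countable Ω] {μ : Measure Ω} [IsFiniteMeasure μ]

theorem condExp_le_X1v_add_of_le_of_le_add (hc : ∀ ω, μ {ω} ≠ 0) (hU : PayoffAssumption 𝓕 U r)
    {t g δ : ℝ≥0∞} (htg : t ≤ g) (hgt : g ≤ t + δ) {τ : Ω → ℝ≥0∞}
    (hτ : τ ∈ STge 𝓕 fun _ => g) {ε : ℝ}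
    (hopt : ∀ ω, μ[fun ω' => U g (τ ω') ω' | 𝓕 g] ω ≤ X1v μ 𝓕 U g ω + ε) (ω : Ω) :
    μ[fun ω' => U t (τ ω') ω' | 𝓕 t] ω ≤ X1v μ 𝓕 U t ω + ε + 2 * r (δ + δ) := by
  have hd : dd t g ≤ δ := dd_le_of_le_of_le_add htg hgt
  have hτm := measurable_of_isStoppingTime hτ.1
  have htower : ∀ f : Ω → ℝ, μ[μ[f | 𝓕 g] | 𝓕 t] ω = μ[f | 𝓕 t] ω := fun f =>
    forall_of_ae hc (condExp_condExp_of_le (𝓕.mono htg) (𝓕.le g)) ω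
  have hshift : μ[fun ω' => U t (τ ω') ω' | 𝓕 t] ω ≤
      μ[fun ω' => U g (τ ω') ω' | 𝓕 t] ω + r (δ + δ) :=
    condExp_le_condExp_add hc (𝓕.le t) (hU.integrable_comp measurable_const hτm)
      (hU.integrable_comp measurable_const hτm)
      (fun ω' => hU.le_add_of_dd_le (by rw [dd_self, add_zero]; exact hd.trans le_self_add) ω') ω
  have hcompare : ∀ σ : STge 𝓕 (fun _ => t), μ[fun ω' => U g (τ ω') ω' | 𝓕 t] ω ≤
      μ[fun ω' => U t (σ.1 ω') ω' | 𝓕 t] ω + ε + r (δ + δ) := by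
    rintro ⟨σ, hσ, hσt⟩
    -- `τ` is `ε`-optimal at `g` against `σ ∨ g`, which is within `δ` of `σ`
    set σ' : Ω → ℝ≥0∞ := fun ω' => σ ω' ⊔ g
    have hσ' : σ' ∈ STge 𝓕 fun _ => g :=
      ⟨by simpa only [σ', WithTop.coe_max] using hσ.max_const g, fun _ => le_sup_right⟩
    have hσm := measurable_of_isStoppingTime hσ
    have hσ'm := measurable_of_isStoppingTime hσ'.1
    have hopt' : ∀ ω', μ[fun ω'' => U g (τ ω'') ω'' | 𝓕 g] ω' ≤
        μ[fun ω'' => U g (σ' ω'') ω'' | 𝓕 g] ω' + ε := fun ω' =>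
      (hopt ω').trans (add_le_add_left (ciInf_le (hU.bddBelow_condExp hc g ω') ⟨σ', hσ'⟩) ε)
    have hat_g := condExp_le_condExp_add hc (𝓕.le t) integrable_condExp integrable_condExp hopt' ω
    rw [htower, htower] at hat_g
    have hdist : ∀ ω', dd g t + dd (σ' ω') (σ ω') ≤ δ + δ := fun ω' => by
      rw [dd_comm g, dd_comm (σ' ω')]
      exact add_le_add hd (dd_le_of_le_of_le_add le_sup_left
        (sup_le le_self_add (hgt.trans (add_le_add_left (hσt ω') δ))))
    have hback : μ[fun ω' => U g (σ' ω') ω' | 𝓕 t] ω ≤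
        μ[fun ω' => U t (σ ω') ω' | 𝓕 t] ω + r (δ + δ) :=
      condExp_le_condExp_add hc (𝓕.le t) (hU.integrable_comp measurable_const hσ'm)
        (hU.integrable_comp measurable_const hσm) (fun ω' => hU.le_add_of_dd_le (hdist ω') ω') ω
    linarith
  have hne : Nonempty (STge 𝓕 fun _ => t) :=
    ⟨⟨fun _ => t, isStoppingTime_const 𝓕 t, fun _ => le_rfl⟩⟩
  have hX : μ[fun ω' => U g (τ ω') ω' | 𝓕 t] ω - ε - r (δ + δ) ≤ X1v μ 𝓕 U t ω :=
    le_ciInf fun σ => by linarith [hcompare σ]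
  linarith

theorem condExp_gridStrat_lt_X1v_add (hc : ∀ ω, μ {ω} ≠ 0) (hU : PayoffAssumption 𝓕 U r)
    {ε h : ℝ} (hε : 0 < ε) (hh : 0 < h)
    (hr : r (ENNReal.ofReal h + ENNReal.ofReal h) < ε / 2)
    {τbar : ℕ → Ω → ℝ≥0∞} (hopt : IsOptTau1 μ 𝓕 U ε h τbar) (t : ℝ≥0∞) (ω : Ω) :
    μ[fun ω' => U t (gridStrat h τbar t ω') ω' | 𝓕 t] ω < X1v μ 𝓕 U t ω + 2 * ε := by
  by_cases ht : t = ∞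
  · subst ht
    have hne : Nonempty (STge 𝓕 fun _ => ∞) :=
      ⟨⟨fun _ => ∞, isStoppingTime_const 𝓕 ∞, fun _ => le_rfl⟩⟩
    have hσ : ∀ σ : STge 𝓕 (fun _ => ∞), (fun ω' => U ∞ (σ.1 ω') ω') = fun ω' => U ∞ ∞ ω' :=
      fun σ => funext fun ω' => by rw [top_le_iff.mp (σ.2.2 ω')]
    have hX : X1v μ 𝓕 U ∞ ω = μ[fun ω' => U ∞ ∞ ω' | 𝓕 ∞] ω := by
      simp only [X1v, hσ, ciInf_const]
    simp only [gridStrat, if_true, hX]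
    linarith
  · set n := gridIdx h t
    have hstep := condExp_le_X1v_add_of_le_of_le_add hc hU (le_grid_gridIdx hh ht)
      (grid_gridIdx_le hh ht) (hopt n).1 (forall_of_ae hc (hopt n).2) ω
    simp only [gridStrat, if_neg ht]
    linarith

theorem condExp_stoppingTime_gridStrat_sub_lt_X1v (hc : ∀ ω, μ {ω} ≠ 0)
    (hU : PayoffAssumption 𝓕 U r) {ε h : ℝ} (hε : 0 < ε) (hh : 0 < h)
    (hr : r (ENNReal.ofReal h + ENNReal.ofReal h) < ε / 2)
    {τbar : ℕ → Ω → ℝ≥0∞} (hopt : IsOptTau1 μ 𝓕 U ε h τbar) {ρ₀ : Ω → ℝ≥0∞}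
    (hρ₀ : IsStoppingTime 𝓕 fun ω => (ρ₀ ω : WithTop ℝ≥0∞)) (ω : Ω) :
    μ[fun ω' => U (ρ₀ ω') (evalAt (gridStrat h τbar) ρ₀ ω') ω' | hρ₀.measurableSpace] ω - 2 * ε
      < X1v μ 𝓕 U (ρ₀ ω) ω := by
  have hρm := measurable_of_isStoppingTime hρ₀
  have hgrid := measurable_gridStrat (h := h) fun n => measurable_of_isStoppingTime (hopt n).1.1
  simp only [evalAt]
  rw [condExp_stoppingTime_apply hc hρ₀ (F := fun t ω' => U t (gridStrat h τbar t ω') ω')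
    (hU.integrable_comp hρm (measurable_apply_of_countable_s5 hgrid hρm))
    (fun t => hU.integrable_comp measurable_const (hgrid t))]
  linarith [condExp_gridStrat_lt_X1v_add hc hU hε hh hr hopt (ρ₀ ω) ω]

end Payoff

def swapNeg (U : ℝ≥0∞ → ℝ≥0∞ → Ω → ℝ) : ℝ≥0∞ → ℝ≥0∞ → Ω → ℝ := fun s t ω => -U t s ω

section SwapNeg

variable {𝓕 : Filtration ℝ≥0∞ mΩ} {U : ℝ≥0∞ → ℝ≥0∞ → Ω → ℝ} {r : ℝ≥0∞ → ℝ}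

theorem PayoffAssumption.swapNeg (hU : PayoffAssumption 𝓕 U r) :
    PayoffAssumption 𝓕 (swapNeg U) r := by
  obtain ⟨⟨M, hM⟩, hmeas, hmono, hnonneg, hbdd, hr0, hlim, hmod⟩ := hU
  refine ⟨⟨M, fun s t ω => ?_⟩, fun s t => ?_, hmono, hnonneg, hbdd, hr0, hlim,
    fun s t s' t' ω => ?_⟩
  · simpa only [StoppingGames.swapNeg, abs_neg] using hM t s ω
  · rw [sup_comm]
    exact (hmeas t s).neg
  · rw [add_comm]
    simpa only [StoppingGames.swapNeg, neg_sub_neg, abs_sub_comm] using hmod t s t' s' ω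

variable [Countable Ω] {μ : Measure Ω}

theorem X1v_swapNeg (hc : ∀ ω, μ {ω} ≠ 0) (t : ℝ≥0∞) (ω : Ω) :
    X1v μ 𝓕 (swapNeg U) t ω = -Y1v μ 𝓕 U t ω := by
  simp only [X1v, Y1v, swapNeg, condExp_neg_apply hc]
  simpa only [neg_one_mul] using (Real.mul_iSup_of_nonpos (r := -1) (by norm_num) _).symm

theorem IsOptRho1.isOptTau1_swapNeg (hc : ∀ ω, μ {ω} ≠ 0) {ε h : ℝ} {bar : ℕ → Ω → ℝ≥0∞}
    (hopt : IsOptRho1 μ 𝓕 U ε h bar) : IsOptTau1 μ 𝓕 (swapNeg U) ε h bar := by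
  refine fun n => ⟨(hopt n).1, ae_of_all _ fun ω => ?_⟩
  rw [X1v_swapNeg hc]
  simp only [swapNeg, condExp_neg_apply hc]
  linarith [forall_of_ae hc (hopt n).2 ω]

theorem Y1v_lt_condExp_stoppingTime_gridStrat_add [IsFiniteMeasure μ] (hc : ∀ ω, μ {ω} ≠ 0)
    (hU : PayoffAssumption 𝓕 U r) {ε h : ℝ} (hε : 0 < ε) (hh : 0 < h)
    (hr : r (ENNReal.ofReal h + ENNReal.ofReal h) < ε / 2)
    {ρbar : ℕ → Ω → ℝ≥0∞} (hopt : IsOptRho1 μ 𝓕 U ε h ρbar) {τ₀ : Ω → ℝ≥0∞}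
    (hτ₀ : IsStoppingTime 𝓕 fun ω => (τ₀ ω : WithTop ℝ≥0∞)) (ω : Ω) :
    Y1v μ 𝓕 U (τ₀ ω) ω <
      μ[fun ω' => U (evalAt (gridStrat h ρbar) τ₀ ω') (τ₀ ω') ω' | hτ₀.measurableSpace] ω
        + 2 * ε := by
  have hX := condExp_stoppingTime_gridStrat_sub_lt_X1v hc hU.swapNeg hε hh hr
    (hopt.isOptTau1_swapNeg hc) hτ₀ ω
  rw [X1v_swapNeg hc] at hX
  simp only [swapNeg, condExp_neg_apply hc] at hX
  linarith

end SwapNeg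

/-- Lemma 3.2: for every `ε > 0` there is `h' > 0` such that for every
`h ∈ (0,h')` and every choice of `ε`-optimizer families `ρ̄, τ̄` on the grid, for all stopping
times `ρ₀, τ₀`: a.s. `X_{ρ₀} > E[U(ρ₀, τ_h(ρ₀)) | 𝓕_{ρ₀}] − 2ε` and
`Y_{τ₀} < E[U(ρ_h(τ₀), τ₀) | 𝓕_{τ₀}] + 2ε`. -/
theorem approximation_lemma [Countable Ω] (μ : Measure Ω) [IsProbabilityMeasure μ]
    (𝓕 : Filtration ℝ≥0∞ mΩ) (hsetup : UsualSetup μ 𝓕)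
    (U : ℝ≥0∞ → ℝ≥0∞ → Ω → ℝ) (r : ℝ≥0∞ → ℝ) (hU : PayoffAssumption 𝓕 U r)
    (ε : ℝ) (hε : 0 < ε) :
    ∃ h' : ℝ, 0 < h' ∧ ∀ h : ℝ, 0 < h → h < h' →
      ∀ ρbar τbar : ℕ → Ω → ℝ≥0∞,
        IsOptRho1 μ 𝓕 U ε h ρbar → IsOptTau1 μ 𝓕 U ε h τbar →
        ∀ (ρ₀ τ₀ : Ω → ℝ≥0∞) (hρ₀ : IsStoppingTime 𝓕 (fun ω => (ρ₀ ω : WithTop ℝ≥0∞))) (hτ₀ : IsStoppingTime 𝓕 (fun ω => (τ₀ ω : WithTop ℝ≥0∞))),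
          (∀ᵐ ω ∂μ,
            (μ[fun ω' => U (ρ₀ ω') (evalAt (gridStrat h τbar) ρ₀ ω') ω' |
              hρ₀.measurableSpace]) ω - 2*ε < X1v μ 𝓕 U (ρ₀ ω) ω) ∧
          (∀ᵐ ω ∂μ,
            Y1v μ 𝓕 U (τ₀ ω) ω <
              (μ[fun ω' => U (evalAt (gridStrat h ρbar) τ₀ ω') (τ₀ ω') ω' |
                hτ₀.measurableSpace]) ω + 2*ε) := by
  obtain ⟨hc, -⟩ := hsetup
  obtain ⟨-, -, -, -, -, -, hr_lim, -⟩ := id hU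
  obtain ⟨h', hh', hsmall⟩ := mem_nhdsGT_iff_exists_Ioo_subset.mp
    ((hr_lim.comp tendsto_ofReal_add_ofReal_nhdsGT_zero) (Iio_mem_nhds (half_pos hε)))
  refine ⟨h', hh', ?_⟩
  intro h hh hhh' ρbar τbar hρbar hτbar ρ₀ τ₀ hρ₀ hτ₀
  have hr := hsmall ⟨hh, hhh'⟩
  exact ⟨ae_of_all _ (condExp_stoppingTime_gridStrat_sub_lt_X1v hc hU hε hh hr hτbar hρ₀),
    ae_of_all _ (Y1v_lt_condExp_stoppingTime_gridStrat_add hc hU hε hh hr hρbar hτ₀)⟩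

end StoppingGames
end
end

section
/- Let τ₀ ∈ 𝒯 and let ν ∈ 𝒯 with ν ≥ τ₀. Then almost surely E[ess sup_{σ∈𝒯_ν} E[U(σ, τ₀) | 𝓕_ν] | 𝓕_{τ₀}] = ess sup_{σ∈𝒯_ν} E[U(σ, τ₀) | 𝓕_{τ₀}] = ess sup_{σ∈𝒯_{τ₀}} E[U(σ ∨ ν, τ₀) | 𝓕_{τ₀}]. -/
/-!
Common setup for "On the non-zero-sum stopping game ending at the maximum of the stopping
strategies".  Time is indexed by `[0,∞] = ℝ≥0∞`.  Since `Ω` is at most countable and `ℙ`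
charges every point, essential suprema/infima over families of stopping times coincide with
the pointwise ones, which is how they are formalized below.
-/

open MeasureTheory Filter Set
open scoped ENNReal Topology

noncomputable section

namespace StoppingGames

variable {Ω : Type*} [mΩ : MeasurableSpace Ω]

/-!
On a countable space every sub-σ-algebra is generated by its atoms, and stopping times `≥ ν`
can be glued along the atoms of `𝓕_ν` into a new stopping time. Gluing atomwise `ε`-optimal
choices gives one `σ ∈ 𝒯_ν` with `ess sup_{σ'} E[U(σ',τ₀)|𝓕_ν] ≤ E[U(σ,τ₀)|𝓕_ν] + ε`, and the
tower property turns this into the first equality. The second one is the reindexing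
`σ ↦ σ ∨ ν`, which maps `𝒯_{τ₀}` onto `𝒯_ν` because `τ₀ ≤ ν`.
-/

section

variable {α : Type*}

lemma _root_.Measurable.eq_of_mem_measurableAtom {m : MeasurableSpace α} {β : Type*}
    [MeasurableSpace β] [MeasurableSingletonClass β] {f : α → β} (hf : Measurable[m] f) {x y : α}
    (h : y ∈ @measurableAtom α m x) : f y = f x :=
  @mem_of_mem_measurableAtom α m x y h _ (hf (measurableSet_singleton (f x))) rfl

lemma measurable_of_forall_mem_measurableAtom [Countable α] {m : MeasurableSpace α} {β : Type*}
    [MeasurableSpace β] {f : α → β} (hf : ∀ x y, y ∈ @measurableAtom α m x → f y = f x) :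
    Measurable[m] f := by
  intro s _
  have h : f ⁻¹' s = ⋃ (x : α) (_ : f x ∈ s), @measurableAtom α m x := by
    ext z
    simp only [Set.mem_preimage, Set.mem_iUnion]
    refine ⟨fun hz => ⟨z, hz, @mem_measurableAtom_self α m z⟩, ?_⟩
    rintro ⟨x, hx, hzx⟩
    rwa [hf x z hzx]
  rw [h]
  exact .iUnion fun x => .iUnion fun _ => @MeasurableSet.measurableAtom_of_countable α m _ x

lemma _root_.Measurable.apply_of_countable [Countable α] [MeasurableSpace α] {β γ : Type*}
    [MeasurableSpace β] [MeasurableSingletonClass β] [MeasurableSpace γ] {g : α → β}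
    (hg : Measurable g) {F : β → α → γ} (hF : ∀ b, Measurable (F b)) :
    Measurable fun ω => F (g ω) ω := by
  intro s hs
  have h : (fun ω => F (g ω) ω) ⁻¹' s = ⋃ ω₀ : α, g ⁻¹' {g ω₀} ∩ F (g ω₀) ⁻¹' s := by
    ext ω
    simp only [Set.mem_preimage, Set.mem_iUnion, Set.mem_inter_iff, Set.mem_singleton_iff]
    exact ⟨fun hω => ⟨ω, rfl, hω⟩, fun ⟨_, h1, h2⟩ => h1 ▸ h2⟩
  rw [h]
  exact .iUnion fun ω₀ => (hg (measurableSet_singleton _)).inter (hF _ hs)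

lemma measurable_of_isStoppingTime_coe [MeasurableSpace α] {ι : Type*} [LinearOrder ι]
    [TopologicalSpace ι] [OrderTopology ι] [SecondCountableTopology ι] [MeasurableSpace ι]
    [BorelSpace ι] {𝓕 : Filtration ι ‹MeasurableSpace α›} {σ : α → ι}
    (hσ : IsStoppingTime 𝓕 fun ω => (σ ω : WithTop ι)) : Measurable σ :=
  measurable_of_Iic fun t => 𝓕.le t _
    (by simpa only [WithTop.coe_le_coe] using hσ t : MeasurableSet[𝓕 t] {ω | σ ω ≤ t})

lemma _root_.MeasureTheory.IsStoppingTime.of_eqOn_measurableAtom [Countable α] [MeasurableSpace α]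
    {ι : Type*} [Preorder ι] {𝓕 : Filtration ι ‹MeasurableSpace α›} {ν σ : α → WithTop ι}
    (hν : IsStoppingTime 𝓕 ν) (hνσ : ν ≤ σ)
    (hσ : ∀ x, ∃ σ', IsStoppingTime 𝓕 σ' ∧
      Set.EqOn σ σ' (@measurableAtom α hν.measurableSpace x)) :
    IsStoppingTime 𝓕 σ := by
  choose σ' hσ' hEq using hσ
  intro t
  have h : {ω | σ ω ≤ t} = ⋃ x, (@measurableAtom α hν.measurableSpace x ∩ {ω | ν ω ≤ t}) ∩
      {ω | σ' x ω ≤ t} := by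
    ext ω
    simp only [Set.mem_ofPred_eq, Set.mem_iUnion, Set.mem_inter_iff]
    refine ⟨fun hω => ⟨ω, ⟨@mem_measurableAtom_self α hν.measurableSpace ω, (hνσ ω).trans hω⟩,
      hEq ω (@mem_measurableAtom_self α hν.measurableSpace ω) ▸ hω⟩, ?_⟩
    rintro ⟨x, ⟨hx, -⟩, hω⟩
    rwa [hEq x hx]
  rw [h]
  have hatom : ∀ x, MeasurableSet[hν.measurableSpace] (@measurableAtom α hν.measurableSpace x) :=
    @MeasurableSet.measurableAtom_of_countable α hν.measurableSpace _
  exact .iUnion fun x => (((hν.measurableSet _).1 (hatom x)).2 t).inter (hσ' x t)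

end

section

variable {α : Type*} {m₀ m : MeasurableSpace α} [mα : MeasurableSpace α] {μ : Measure α}

lemma abs_condExp_le_of_abs_le [Countable α] (hμ : ∀ x, μ {x} ≠ 0) {f : α → ℝ} {M : ℝ}
    (hf : ∀ x, |f x| ≤ M) (x : α) : |μ[f | m] x| ≤ M :=
  ae_iff_of_countable.1 (ae_bdd_abs_condExp_of_ae_bdd_abs (ae_of_all _ hf)) x (hμ x)

lemma condExp_eqOn_of_eqOn [Countable α] (hμ : ∀ x, μ {x} ≠ 0) {s : Set α}
    (hs : MeasurableSet[m] s) {f g : α → ℝ} (hf : Integrable f μ) (hg : Integrable g μ)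
    (hfg : Set.EqOn f g s) :
    Set.EqOn (μ[f | m]) (μ[g | m]) s := by
  have h : s.indicator (μ[f | m]) =ᵐ[μ] s.indicator (μ[g | m]) :=
    (condExp_indicator hf hs).symm.trans (Set.indicator_congr hfg ▸ condExp_indicator hg hs)
  intro x hx
  simpa only [Set.indicator_of_mem hx] using ae_iff_of_countable.1 h x (hμ x)

lemma iSup_condExp_eq_of_mem_measurableAtom {ι : Type*} (X : ι → α → ℝ) {x y : α}
    (h : y ∈ @measurableAtom α m x) : ⨆ i, μ[X i | m] y = ⨆ i, μ[X i | m] x :=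
  iSup_congr fun _ => stronglyMeasurable_condExp.measurable.eq_of_mem_measurableAtom h

def IsStableUnderPasting (m : MeasurableSpace α) {ι : Type*} (X : ι → α → ℝ) : Prop :=
  ∀ s : α → ι, (∀ x y, y ∈ @measurableAtom α m x → s y = s x) → ∃ i, ∀ x, X i x = X (s x) x

lemma exists_iSup_condExp_le_condExp_add [Countable α] (hμ : ∀ x, μ {x} ≠ 0) {ι : Type*}
    [Nonempty ι] {X : ι → α → ℝ} (hX : ∀ i, Integrable (X i) μ)
    (hpaste : IsStableUnderPasting m X) {ε : ℝ} (hε : 0 < ε) :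
    ∃ i, ∀ x, ⨆ j, μ[X j | m] x ≤ μ[X i | m] x + ε := by
  have hsel : ∀ x, ∃ i, (⨆ j, μ[X j | m] x) - ε < μ[X i | m] x := fun x =>
    exists_lt_of_lt_ciSup (sub_lt_self _ hε)
  choose sel hsel using hsel
  -- one representative per atom: the choice depends on the atom only
  let c : α → α := fun x =>
    Set.Nonempty.some (s := @measurableAtom α m x) ⟨x, @mem_measurableAtom_self α m x⟩
  have hc : ∀ x y, y ∈ @measurableAtom α m x → c y = c x := fun x y h => by
    simp only [c, @measurableAtom_eq_of_mem α m y x h]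
  obtain ⟨i, hi⟩ := hpaste (sel ∘ c) fun x y h => congrArg sel (hc x y h)
  refine ⟨i, fun x => ?_⟩
  have hcx : c x ∈ @measurableAtom α m x := Set.Nonempty.some_mem _
  have hA : MeasurableSet[m] (@measurableAtom α m x) :=
    @MeasurableSet.measurableAtom_of_countable α m _ x
  have hatom : Set.EqOn (μ[X i | m]) (μ[X (sel (c x)) | m]) (@measurableAtom α m x) :=
    condExp_eqOn_of_eqOn hμ hA (hX _) (hX _)
      fun y hy => by rw [hi y, Function.comp_apply, hc x y hy]
  calc ⨆ j, μ[X j | m] x = ⨆ j, μ[X j | m] (c x) :=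
        (iSup_condExp_eq_of_mem_measurableAtom (μ := μ) X hcx).symm
    _ ≤ μ[X (sel (c x)) | m] (c x) + ε := by linarith [hsel (c x)]
    _ = μ[X i | m] x + ε := by
      rw [stronglyMeasurable_condExp.measurable.eq_of_mem_measurableAtom hcx,
        hatom (@mem_measurableAtom_self α m x)]

lemma bddAbove_range_condExp [Countable α] (hμ : ∀ x, μ {x} ≠ 0) {ι : Type*} {X : ι → α → ℝ}
    {M : ℝ} (hXM : ∀ i x, |X i x| ≤ M) (x : α) : BddAbove (Set.range fun i => μ[X i | m] x) :=
  ⟨M, Set.forall_mem_range.2 fun i => (abs_le.1 (abs_condExp_le_of_abs_le hμ (hXM i) x)).2⟩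

lemma integrable_iSup_condExp [Countable α] [IsFiniteMeasure μ] (hμ : ∀ x, μ {x} ≠ 0)
    (hm : m ≤ mα) {ι : Type*} [Nonempty ι] {X : ι → α → ℝ} {M : ℝ} (hXM : ∀ i x, |X i x| ≤ M) :
    Integrable (fun x => ⨆ i, μ[X i | m] x) μ := by
  have hmeas : Measurable[m] fun x => ⨆ i, μ[X i | m] x :=
    measurable_of_forall_mem_measurableAtom fun _ _ => iSup_condExp_eq_of_mem_measurableAtom X
  refine .of_bound (hmeas.mono hm le_rfl).aestronglyMeasurable M (ae_of_all _ fun x => ?_)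
  obtain ⟨i⟩ := ‹Nonempty ι›
  have hi := abs_le.1 (abs_condExp_le_of_abs_le (m := m) hμ (hXM i) x)
  rw [Real.norm_eq_abs, abs_le]
  exact ⟨hi.1.trans (le_ciSup (bddAbove_range_condExp hμ hXM x) i),
    ciSup_le fun j => (abs_le.1 (abs_condExp_le_of_abs_le hμ (hXM j) x)).2⟩

theorem condExp_iSup_condExp [Countable α] [IsFiniteMeasure μ] (hμ : ∀ x, μ {x} ≠ 0)
    (hm₀ : m₀ ≤ m) (hm : m ≤ mα) {ι : Type*} [Nonempty ι]
    {X : ι → α → ℝ} {M : ℝ} (hX : ∀ i, Integrable (X i) μ) (hXM : ∀ i x, |X i x| ≤ M)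
    (hpaste : IsStableUnderPasting m X) (x : α) :
    μ[fun y => ⨆ i, μ[X i | m] y | m₀] x = ⨆ i, μ[X i | m₀] x := by
  have hGint := integrable_iSup_condExp hμ hm hXM
  have htower : ∀ i, μ[μ[X i | m] | m₀] x = μ[X i | m₀] x := fun i =>
    ae_iff_of_countable.1 (condExp_condExp_of_le hm₀ hm) x (hμ x)
  refine le_antisymm (le_of_forall_pos_le_add fun ε hε => ?_) (ciSup_le fun i => ?_)
  · obtain ⟨i, hi⟩ := exists_iSup_condExp_le_condExp_add hμ hX hpaste hε
    have hmono := condExp_mono (m := m₀) hGint (integrable_condExp.add (integrable_const ε))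
      (ae_of_all _ hi)
    have hadd := condExp_add (integrable_condExp (m := m) (μ := μ) (f := X i))
      (integrable_const ε) m₀
    calc μ[fun y => ⨆ i, μ[X i | m] y | m₀] x
        ≤ μ[μ[X i | m] + fun _ => ε | m₀] x := ae_iff_of_countable.1 hmono x (hμ x)
      _ = μ[X i | m₀] x + ε := by
        rw [ae_iff_of_countable.1 hadd x (hμ x), Pi.add_apply, htower,
          condExp_const (hm₀.trans hm)]
      _ ≤ (⨆ i, μ[X i | m₀] x) + ε := by
        gcongr
        exact le_ciSup (bddAbove_range_condExp hμ hXM x) i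
  · rw [← htower]
    exact ae_iff_of_countable.1 (condExp_mono integrable_condExp hGint (ae_of_all _ fun y =>
      le_ciSup (bddAbove_range_condExp hμ hXM y) i)) x (hμ x)

end

section

variable {𝓕 : Filtration ℝ≥0∞ mΩ}

def STge.sup {τ₀ ν : Ω → ℝ≥0∞} (hν : IsStoppingTime 𝓕 fun ω => (ν ω : WithTop ℝ≥0∞))
    (σ : STge 𝓕 τ₀) : STge 𝓕 ν :=
  ⟨fun ω => σ.1 ω ⊔ ν ω, σ.2.1.max hν, fun _ => le_sup_right⟩

lemma STge.sup_surjective {τ₀ ν : Ω → ℝ≥0∞}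
    (hν : IsStoppingTime 𝓕 fun ω => (ν ω : WithTop ℝ≥0∞)) (hle : ∀ ω, τ₀ ω ≤ ν ω) :
    Function.Surjective (STge.sup (τ₀ := τ₀) hν) := fun σ =>
  ⟨⟨σ.1, σ.2.1, fun ω => (hle ω).trans (σ.2.2 ω)⟩,
    Subtype.ext (funext fun ω => sup_eq_left.2 (σ.2.2 ω))⟩

lemma isStableUnderPasting_STge [Countable Ω] {ν τ : Ω → ℝ≥0∞}
    (hν : IsStoppingTime 𝓕 fun ω => (ν ω : WithTop ℝ≥0∞)) (U : ℝ≥0∞ → ℝ≥0∞ → Ω → ℝ) :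
    IsStableUnderPasting hν.measurableSpace
      fun σ : STge 𝓕 ν => fun ω => U (σ.1 ω) (τ ω) ω := by
  intro s hs
  refine ⟨⟨fun ω => (s ω).1 ω, ?_, fun ω => (s ω).2.2 ω⟩, fun _ => rfl⟩
  refine hν.of_eqOn_measurableAtom (fun ω => WithTop.coe_le_coe.2 ((s ω).2.2 ω)) fun x =>
    ⟨_, (s x).2.1, fun y hy => ?_⟩
  simp only [hs x y hy]

lemma integrable_apply_of_measurable [Countable Ω] {μ : Measure Ω} [IsFiniteMeasure μ]
    {U : ℝ≥0∞ → ℝ≥0∞ → Ω → ℝ} {M : ℝ} (hUbd : ∀ s t ω, |U s t ω| ≤ M)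
    (hUmeas : ∀ s t, Measurable (U s t)) {σ τ : Ω → ℝ≥0∞} (hσ : Measurable σ)
    (hτ : Measurable τ) : Integrable (fun ω => U (σ ω) (τ ω) ω) μ :=
  .of_bound ((hσ.prodMk hτ).apply_of_countable (F := fun p => U p.1 p.2)
      fun p => hUmeas p.1 p.2).aestronglyMeasurable M
    (ae_of_all _ fun _ => (Real.norm_eq_abs _).le.trans (hUbd _ _ _))

end

theorem condexp_esssup_exchange_general [Countable Ω] (μ : Measure Ω) [IsProbabilityMeasure μ]
    (𝓕 : Filtration ℝ≥0∞ mΩ) (hsetup : UsualSetup μ 𝓕)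
    (U : ℝ≥0∞ → ℝ≥0∞ → Ω → ℝ)
    (hUbd : ∃ M : ℝ, ∀ s t ω, |U s t ω| ≤ M)
    (hUmeas : ∀ s t : ℝ≥0∞, Measurable[𝓕 (s ⊔ t)] (U s t))
    (τ₀ ν : Ω → ℝ≥0∞) (hτ₀ : IsStoppingTime 𝓕 (fun ω => (τ₀ ω : WithTop ℝ≥0∞)))
    (hν : IsStoppingTime 𝓕 (fun ω => (ν ω : WithTop ℝ≥0∞)))
    (hle : ∀ ω, τ₀ ω ≤ ν ω) :
    ∀ᵐ ω ∂μ,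
      (μ[fun ω' => ⨆ σ : STge 𝓕 ν,
            (μ[fun ω'' => U (σ.1 ω'') (τ₀ ω'') ω'' | hν.measurableSpace]) ω' |
          hτ₀.measurableSpace]) ω
        = (⨆ σ : STge 𝓕 ν,
            (μ[fun ω' => U (σ.1 ω') (τ₀ ω') ω' | hτ₀.measurableSpace]) ω) ∧
      (⨆ σ : STge 𝓕 ν, (μ[fun ω' => U (σ.1 ω') (τ₀ ω') ω' | hτ₀.measurableSpace]) ω)
        = ⨆ σ : STge 𝓕 τ₀,
            (μ[fun ω' => U (σ.1 ω' ⊔ ν ω') (τ₀ ω') ω' | hτ₀.measurableSpace]) ω := by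
  obtain ⟨M, hM⟩ := hUbd
  have hτ₀ν : hτ₀.measurableSpace ≤ hν.measurableSpace :=
    hτ₀.measurableSpace_mono hν fun ω => WithTop.coe_le_coe.2 (hle ω)
  have hint : ∀ σ : STge 𝓕 ν, Integrable (fun ω => U (σ.1 ω) (τ₀ ω) ω) μ := fun σ =>
    integrable_apply_of_measurable hM (fun s t => (hUmeas s t).mono (𝓕.le _) le_rfl)
      (measurable_of_isStoppingTime_coe σ.2.1) (measurable_of_isStoppingTime_coe hτ₀)
  have : Nonempty (STge 𝓕 ν) := ⟨⟨ν, hν, fun _ => le_rfl⟩⟩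
  refine ae_of_all _ fun ω => ⟨?_, ((STge.sup_surjective hν hle).iSup_comp
    fun σ : STge 𝓕 ν => μ[fun ω' => U (σ.1 ω') (τ₀ ω') ω' | hτ₀.measurableSpace] ω).symm⟩
  exact condExp_iSup_condExp hsetup.1 hτ₀ν hν.measurableSpace_le hint (fun _ _ => hM _ _ _)
    (isStableUnderPasting_STge hν U) ω

/-- a step in the proof of Lemma 3.2: for stopping times `τ₀ ≤ ν`, almost
surely `E[ess sup_{σ∈𝒯_ν} E[U(σ,τ₀)|𝓕_ν] | 𝓕_{τ₀}] = ess sup_{σ∈𝒯_ν} E[U(σ,τ₀)|𝓕_{τ₀}]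
= ess sup_{σ∈𝒯_{τ₀}} E[U(σ ∨ ν, τ₀)|𝓕_{τ₀}]`. -/
theorem condexp_esssup_exchange [Countable Ω] (μ : Measure Ω) [IsProbabilityMeasure μ]
    (𝓕 : Filtration ℝ≥0∞ mΩ) (hsetup : UsualSetup μ 𝓕)
    (U : ℝ≥0∞ → ℝ≥0∞ → Ω → ℝ)
    (hUbd : ∃ M : ℝ, ∀ s t ω, |U s t ω| ≤ M)
    (hUmeas : ∀ s t : ℝ≥0∞, Measurable[𝓕 (s ⊔ t)] (U s t))
    (hUlim : LimitsAtInfty U)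
    (τ₀ ν : Ω → ℝ≥0∞) (hτ₀ : IsStoppingTime 𝓕 (fun ω => (τ₀ ω : WithTop ℝ≥0∞)))
    (hν : IsStoppingTime 𝓕 (fun ω => (ν ω : WithTop ℝ≥0∞)))
    (hle : ∀ ω, τ₀ ω ≤ ν ω) :
    ∀ᵐ ω ∂μ,
      (μ[fun ω' => ⨆ σ : STge 𝓕 ν,
            (μ[fun ω'' => U (σ.1 ω'') (τ₀ ω'') ω'' | hν.measurableSpace]) ω' |
          hτ₀.measurableSpace]) ω
        = (⨆ σ : STge 𝓕 ν,
            (μ[fun ω' => U (σ.1 ω') (τ₀ ω') ω' | hτ₀.measurableSpace]) ω) ∧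
      (⨆ σ : STge 𝓕 ν, (μ[fun ω' => U (σ.1 ω') (τ₀ ω') ω' | hτ₀.measurableSpace]) ω)
        = ⨆ σ : STge 𝓕 τ₀,
            (μ[fun ω' => U (σ.1 ω' ⊔ ν ω') (τ₀ ω') ω' | hτ₀.measurableSpace]) ω :=
  condexp_esssup_exchange_general μ 𝓕 hsetup U hUbd hUmeas τ₀ ν hτ₀ hν hle

end StoppingGames
end
end
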